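/- arXiv:2011.02945 — 2 statements merged into one kernel-verified Lean document; each statement's English description precedes it below -/
import Mathlib

section
/- Let A, B, C > 0, N ≥ 3, 2 < q < 2 + 4/N, γ_q = N(q-2)/(2q), 2* = 2N/(N-2), and suppose the function ψ(s) = (s²/2)A - (B/q)s^{qγ_q} - (s^{2*}/2*)C satisfies: ψ(s₀) > 0 for some s₀ > 0. Then ψ' has exactly two zeros 0 < s⁻ < s⁺, with s⁻ a local minimum point of ψ where ψ(s⁻) < 0, and s⁺ a global maximum point of ψ with ψ(s⁺) > 0 and ψ'(s) < 0 for all s > s⁺. -/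
/-!
Write `ψ(s) = A s²/2 - K₁ s^r / r - K₂ s^p / p` with `0 < r < 2 < p`; then `ψ'(s) = s g(s)` for
`g(s) = A - K₁ s^(r-2) - K₂ s^(p-2)`. Since `g'(s) = s^(r-3) (K₁ (2-r) - K₂ (p-2) s^(p-r))`
changes sign once, `g` increases up to a peak and decreases after it, and `g → -∞` at both ends
of `(0, ∞)`. If the peak value were `≤ 0`, `ψ` would be nonincreasing from `ψ(0) = 0`, contradicting
`ψ(s₀) > 0`. So `g` has exactly two zeros `s⁻ < s⁺` with sign pattern `-, +, -`, and `ψ` decreases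
on `[0, s⁻]`, increases on `[s⁻, s⁺]` and decreases after `s⁺`. As `ψ(0) = 0`, `ψ(s⁻) < 0` and
`ψ ≤ 0` on `[0, s⁻]`, so the maximum of `ψ` on `[s⁻, ∞)`, attained at `s⁺`, is global and
positive.
-/

open Set Filter Topology

/-- The fiber map of the paper is `fiberMap A (B γ_q) C (q γ_q) 2*`. -/
noncomputable def fiberMap (A K₁ K₂ r p s : ℝ) : ℝ :=
  A / 2 * s ^ (2 : ℝ) - K₁ / r * s ^ r - K₂ / p * s ^ p

noncomputable def fiberSlope (A K₁ K₂ r p s : ℝ) : ℝ :=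
  A - K₁ * s ^ (r - 2) - K₂ * s ^ (p - 2)

noncomputable def fiberSlopePeak (K₁ K₂ r p : ℝ) : ℝ :=
  (K₁ * (2 - r) / (K₂ * (p - 2))) ^ (p - r)⁻¹

structure IsNegPosNeg (g : ℝ → ℝ) (x y : ℝ) : Prop where
  pos : 0 < x
  lt : x < y
  zero_left : g x = 0
  zero_right : g y = 0
  neg_left : ∀ s ∈ Ioo 0 x, g s < 0
  pos_mid : ∀ s ∈ Ioo x y, 0 < g s
  neg_right : ∀ s ∈ Ioi y, g s < 0

namespace IsNegPosNeg

variable {g : ℝ → ℝ} {x y : ℝ}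

theorem eq_zero_iff (h : IsNegPosNeg g x y) {s : ℝ} (hs : 0 < s) : g s = 0 ↔ s = x ∨ s = y := by
  refine ⟨fun hgs => ?_, by rintro (rfl | rfl) <;> [exact h.zero_left; exact h.zero_right]⟩
  rcases lt_trichotomy s x with hsx | rfl | hxs
  · exact absurd hgs (h.neg_left s ⟨hs, hsx⟩).ne
  · exact Or.inl rfl
  rcases lt_trichotomy s y with hsy | rfl | hys
  · exact absurd hgs (h.pos_mid s ⟨hxs, hsy⟩).ne'
  · exact Or.inr rfl
  · exact absurd hgs (h.neg_right s hys).ne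

end IsNegPosNeg

theorem exists_zero_of_strictMonoOn_Ioc {g : ℝ → ℝ} {a b : ℝ} (hab : a < b)
    (hcont : ContinuousOn g (Ioc a b)) (hmono : StrictMonoOn g (Ioc a b)) (hb : 0 < g b)
    (hlim : Tendsto g (𝓝[>] a) atBot) :
    ∃ x ∈ Ioo a b, g x = 0 ∧ (∀ s ∈ Ioo a x, g s < 0) ∧ ∀ s ∈ Ioc x b, 0 < g s := by
  obtain ⟨c, hgc, hc⟩ :=
    ((hlim.eventually (eventually_lt_atBot 0)).and (Ioo_mem_nhdsGT hab)).exists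
  obtain ⟨x, hx, hgx⟩ :=
    intermediate_value_Icc hc.2.le (hcont.mono (Icc_subset_Ioc hc.1 le_rfl)) ⟨hgc.le, hb.le⟩
  have hxb : x < b := hx.2.lt_of_ne (by rintro rfl; linarith)
  have hxI : x ∈ Ioc a b := ⟨hc.1.trans_le hx.1, hxb.le⟩
  refine ⟨x, ⟨hxI.1, hxb⟩, hgx, fun s hs => ?_, fun s hs => ?_⟩
  · exact hgx ▸ hmono ⟨hs.1, hs.2.le.trans hxb.le⟩ hxI hs.2
  · exact hgx ▸ hmono hxI ⟨hxI.1.trans hs.1, hs.2⟩ hs.1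

theorem exists_zero_of_strictAntiOn_Ici {g : ℝ → ℝ} {b : ℝ}
    (hcont : ContinuousOn g (Ici b)) (hanti : StrictAntiOn g (Ici b)) (hb : 0 < g b)
    (hlim : Tendsto g atTop atBot) :
    ∃ y ∈ Ioi b, g y = 0 ∧ (∀ s ∈ Ico b y, 0 < g s) ∧ ∀ s ∈ Ioi y, g s < 0 := by
  obtain ⟨c, hgc, hc⟩ :=
    ((hlim.eventually (eventually_lt_atBot 0)).and (eventually_ge_atTop b)).exists
  obtain ⟨y, hy, hgy⟩ :=
    intermediate_value_Icc' hc (hcont.mono Icc_subset_Ici_self) ⟨hgc.le, hb.le⟩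
  have hby : b < y := hy.1.lt_of_ne (by rintro rfl; linarith)
  refine ⟨y, hby, hgy, fun s hs => ?_, fun s hs => ?_⟩
  · exact hgy ▸ hanti hs.1 hby.le hs.2
  · exact hgy ▸ hanti hby.le (hby.le.trans hs.le : b ≤ s) hs

theorem tendsto_const_sub_mul_atBot {α : Type*} {l : Filter α} {f : α → ℝ} (A : ℝ) {K : ℝ}
    (hK : 0 < K) (hf : Tendsto f l atTop) : Tendsto (fun s => A - K * f s) l atBot := by
  simpa only [sub_eq_add_neg, Function.comp_def] using
    tendsto_atBot_add_const_left l A (tendsto_neg_atTop_atBot.comp (hf.const_mul_atTop hK))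

section Fiber

variable {A K₁ K₂ r p : ℝ}

theorem mul_fiberSlope {s : ℝ} (hs : 0 < s) :
    s * fiberSlope A K₁ K₂ r p s = s * A - K₁ * s ^ (r - 1) - K₂ * s ^ (p - 1) := by
  have hpow (e : ℝ) : s ^ (e - 1) = s * s ^ (e - 2) := by
    rw [show e - 1 = e - 2 + 1 by ring, Real.rpow_add_one hs.ne', mul_comm]
  rw [fiberSlope, hpow r, hpow p]
  ring

theorem fiberMap_zero (hr : r ≠ 0) (hp : p ≠ 0) : fiberMap A K₁ K₂ r p 0 = 0 := by
  simp [fiberMap, Real.zero_rpow hr, Real.zero_rpow hp]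

theorem continuous_fiberMap (hr : 0 ≤ r) (hp : 0 ≤ p) : Continuous (fiberMap A K₁ K₂ r p) := by
  unfold fiberMap
  have := Real.continuous_rpow_const (q := 2) zero_le_two
  have := Real.continuous_rpow_const hr
  have := Real.continuous_rpow_const hp
  fun_prop

theorem hasDerivAt_fiberMap (hr : r ≠ 0) (hp : p ≠ 0) {s : ℝ} (hs : 0 < s) :
    HasDerivAt (fiberMap A K₁ K₂ r p) (s * fiberSlope A K₁ K₂ r p s) s := by
  have hpow (e : ℝ) := Real.hasDerivAt_rpow_const (x := s) (p := e) (Or.inl hs.ne')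
  refine ((((hpow 2).const_mul (A / 2)).sub ((hpow r).const_mul (K₁ / r))).sub
    ((hpow p).const_mul (K₂ / p))).congr_deriv ?_
  rw [mul_fiberSlope hs]
  field_simp
  norm_num

theorem hasDerivAt_fiberSlope {s : ℝ} (hs : 0 < s) :
    HasDerivAt (fiberSlope A K₁ K₂ r p)
      (s ^ (r - 3) * (K₁ * (2 - r) - K₂ * (p - 2) * s ^ (p - r))) s := by
  have hpow (e : ℝ) := Real.hasDerivAt_rpow_const (x := s) (p := e) (Or.inl hs.ne')
  refine (((hasDerivAt_const s A).sub ((hpow (r - 2)).const_mul K₁)).sub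
    ((hpow (p - 2)).const_mul K₂)).congr_deriv ?_
  have hsplit : s ^ (p - 2 - 1) = s ^ (r - 3) * s ^ (p - r) := by
    rw [← Real.rpow_add hs]; ring_nf
  rw [hsplit, show r - 2 - 1 = r - 3 by ring]
  ring

theorem continuousOn_fiberSlope : ContinuousOn (fiberSlope A K₁ K₂ r p) (Ioi 0) :=
  fun _ hs => (hasDerivAt_fiberSlope hs).continuousAt.continuousWithinAt

theorem lt_fiberSlopePeak_iff (hK₁ : 0 ≤ K₁) (hK₂ : 0 < K₂) (hr : r ≤ 2) (hp : 2 < p) {s : ℝ}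
    (hs : 0 ≤ s) : s < fiberSlopePeak K₁ K₂ r p ↔ K₂ * (p - 2) * s ^ (p - r) < K₁ * (2 - r) := by
  have hc : 0 < K₂ * (p - 2) := mul_pos hK₂ (by linarith)
  rw [fiberSlopePeak, Real.lt_rpow_inv_iff_of_pos hs
    (div_nonneg (mul_nonneg hK₁ (by linarith)) hc.le) (by linarith), lt_div_iff₀ hc, mul_comm]

theorem fiberSlopePeak_lt_iff (hK₁ : 0 ≤ K₁) (hK₂ : 0 < K₂) (hr : r ≤ 2) (hp : 2 < p) {s : ℝ}
    (hs : 0 ≤ s) : fiberSlopePeak K₁ K₂ r p < s ↔ K₁ * (2 - r) < K₂ * (p - 2) * s ^ (p - r) := by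
  have hc : 0 < K₂ * (p - 2) := mul_pos hK₂ (by linarith)
  rw [fiberSlopePeak, Real.rpow_inv_lt_iff_of_pos
    (div_nonneg (mul_nonneg hK₁ (by linarith)) hc.le) hs (by linarith), div_lt_iff₀ hc,
    mul_comm (s ^ (p - r))]

theorem fiberSlopePeak_pos (hK₁ : 0 < K₁) (hK₂ : 0 < K₂) (hr : r < 2) (hp : 2 < p) :
    0 < fiberSlopePeak K₁ K₂ r p :=
  Real.rpow_pos_of_pos (div_pos (mul_pos hK₁ (by linarith)) (mul_pos hK₂ (by linarith))) _

theorem strictMonoOn_fiberSlope (hK₁ : 0 ≤ K₁) (hK₂ : 0 < K₂) (hr : r ≤ 2) (hp : 2 < p) :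
    StrictMonoOn (fiberSlope A K₁ K₂ r p) (Ioc 0 (fiberSlopePeak K₁ K₂ r p)) := by
  refine strictMonoOn_of_hasDerivWithinAt_pos (convex_Ioc _ _)
    (f' := fun s => s ^ (r - 3) * (K₁ * (2 - r) - K₂ * (p - 2) * s ^ (p - r)))
    (continuousOn_fiberSlope.mono Ioc_subset_Ioi_self) (fun s hs => ?_) (fun s hs => ?_)
  · rw [interior_Ioc] at hs
    exact (hasDerivAt_fiberSlope hs.1).hasDerivWithinAt
  · rw [interior_Ioc] at hs
    have := (lt_fiberSlopePeak_iff hK₁ hK₂ hr hp hs.1.le).1 hs.2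
    exact mul_pos (Real.rpow_pos_of_pos hs.1 _) (by linarith)

theorem strictAntiOn_fiberSlope (hK₁ : 0 < K₁) (hK₂ : 0 < K₂) (hr : r < 2) (hp : 2 < p) :
    StrictAntiOn (fiberSlope A K₁ K₂ r p) (Ici (fiberSlopePeak K₁ K₂ r p)) := by
  have hpeak := fiberSlopePeak_pos hK₁ hK₂ hr hp
  refine strictAntiOn_of_hasDerivWithinAt_neg (convex_Ici _)
    (f' := fun s => s ^ (r - 3) * (K₁ * (2 - r) - K₂ * (p - 2) * s ^ (p - r)))
    (continuousOn_fiberSlope.mono (Ici_subset_Ioi.2 hpeak)) (fun s hs => ?_) (fun s hs => ?_)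
  · rw [interior_Ici] at hs
    exact (hasDerivAt_fiberSlope (hpeak.trans hs)).hasDerivWithinAt
  · rw [interior_Ici] at hs
    have := (fiberSlopePeak_lt_iff hK₁.le hK₂ hr.le hp (hpeak.trans hs).le).1 hs
    exact mul_neg_of_pos_of_neg (Real.rpow_pos_of_pos (hpeak.trans hs) _) (by linarith)

theorem tendsto_fiberSlope_nhdsGT_zero (hK₁ : 0 < K₁) (hK₂ : 0 ≤ K₂) (hr : r < 2) :
    Tendsto (fiberSlope A K₁ K₂ r p) (𝓝[>] 0) atBot := by
  refine tendsto_atBot_mono' _ ?_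
    (tendsto_const_sub_mul_atBot A hK₁ (tendsto_rpow_neg_nhdsGT_zero (sub_neg.2 hr)))
  filter_upwards [self_mem_nhdsWithin] with s (hs : 0 < s)
  have : 0 ≤ K₂ * s ^ (p - 2) := mul_nonneg hK₂ (Real.rpow_nonneg hs.le _)
  simp only [fiberSlope]
  linarith

theorem tendsto_fiberSlope_atTop (hK₁ : 0 ≤ K₁) (hK₂ : 0 < K₂) (hp : 2 < p) :
    Tendsto (fiberSlope A K₁ K₂ r p) atTop atBot := by
  refine tendsto_atBot_mono' _ ?_
    (tendsto_const_sub_mul_atBot A hK₂ (tendsto_rpow_atTop (sub_pos.2 hp)))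
  filter_upwards [eventually_gt_atTop 0] with s hs
  have : 0 ≤ K₁ * s ^ (r - 2) := mul_nonneg hK₁ (Real.rpow_nonneg hs.le _)
  simp only [fiberSlope]
  linarith

theorem exists_isNegPosNeg_fiberSlope (hK₁ : 0 < K₁) (hK₂ : 0 < K₂) (hr : r < 2) (hp : 2 < p)
    (hpeak : 0 < fiberSlope A K₁ K₂ r p (fiberSlopePeak K₁ K₂ r p)) :
    ∃ x y, IsNegPosNeg (fiberSlope A K₁ K₂ r p) x y := by
  have hb := fiberSlopePeak_pos hK₁ hK₂ hr hp
  obtain ⟨x, hx, hx0, hneg_left, hpos_left⟩ := exists_zero_of_strictMonoOn_Ioc hb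
    (continuousOn_fiberSlope.mono Ioc_subset_Ioi_self) (strictMonoOn_fiberSlope hK₁.le hK₂ hr.le hp)
    hpeak (tendsto_fiberSlope_nhdsGT_zero hK₁ hK₂.le hr)
  obtain ⟨y, hy, hy0, hpos_right, hneg_right⟩ := exists_zero_of_strictAntiOn_Ici
    (continuousOn_fiberSlope.mono (Ici_subset_Ioi.2 hb)) (strictAntiOn_fiberSlope hK₁ hK₂ hr hp)
    hpeak (tendsto_fiberSlope_atTop hK₁.le hK₂ hp)
  refine ⟨x, y, ⟨hx.1, hx.2.trans hy, hx0, hy0, hneg_left, fun s hs => ?_, hneg_right⟩⟩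
  rcases le_or_gt s (fiberSlopePeak K₁ K₂ r p) with hsb | hbs
  · exact hpos_left s ⟨hs.1, hsb⟩
  · exact hpos_right s ⟨hbs.le, hs.2⟩

theorem strictMonoOn_fiberMap (hr : 0 < r) (hp : 0 < p) {D : Set ℝ} (hD : Convex ℝ D)
    (hslope : ∀ s ∈ interior D, 0 < s ∧ 0 < fiberSlope A K₁ K₂ r p s) :
    StrictMonoOn (fiberMap A K₁ K₂ r p) D :=
  strictMonoOn_of_hasDerivWithinAt_pos hD (continuous_fiberMap hr.le hp.le).continuousOn
    (fun s hs => (hasDerivAt_fiberMap hr.ne' hp.ne' (hslope s hs).1).hasDerivWithinAt)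
    (fun s hs => mul_pos (hslope s hs).1 (hslope s hs).2)

theorem strictAntiOn_fiberMap (hr : 0 < r) (hp : 0 < p) {D : Set ℝ} (hD : Convex ℝ D)
    (hslope : ∀ s ∈ interior D, 0 < s ∧ fiberSlope A K₁ K₂ r p s < 0) :
    StrictAntiOn (fiberMap A K₁ K₂ r p) D :=
  strictAntiOn_of_hasDerivWithinAt_neg hD (continuous_fiberMap hr.le hp.le).continuousOn
    (fun s hs => (hasDerivAt_fiberMap hr.ne' hp.ne' (hslope s hs).1).hasDerivWithinAt)
    (fun s hs => mul_neg_of_pos_of_neg (hslope s hs).1 (hslope s hs).2)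

theorem fiberSlope_peak_pos (hK₁ : 0 < K₁) (hK₂ : 0 < K₂) (hr : 0 < r) (hr2 : r < 2)
    (hp : 2 < p) {s₀ : ℝ} (hs₀ : 0 ≤ s₀) (hpos : 0 < fiberMap A K₁ K₂ r p s₀) :
    0 < fiberSlope A K₁ K₂ r p (fiberSlopePeak K₁ K₂ r p) := by
  by_contra! hpeak
  have hmax : IsMaxOn (fiberSlope A K₁ K₂ r p) (Ioi 0) (fiberSlopePeak K₁ K₂ r p) :=
    isMaxOn_Ioi_of_mono_anti (strictMonoOn_fiberSlope hK₁.le hK₂ hr2.le hp).monotoneOn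
      (strictAntiOn_fiberSlope hK₁ hK₂ hr2 hp).antitoneOn
  have hanti : AntitoneOn (fiberMap A K₁ K₂ r p) (Ici 0) := by
    refine antitoneOn_of_hasDerivWithinAt_nonpos (convex_Ici 0)
      (continuous_fiberMap hr.le (by linarith)).continuousOn
      (fun s hs => (hasDerivAt_fiberMap hr.ne' (by linarith) ?_).hasDerivWithinAt)
      (fun s hs => ?_) <;> rw [interior_Ici] at hs
    · exact hs
    · exact mul_nonpos_of_nonneg_of_nonpos (le_of_lt hs) ((isMaxOn_iff.1 hmax s hs).trans hpeak)
  have := hanti self_mem_Ici hs₀ hs₀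
  rw [fiberMap_zero hr.ne' (by linarith)] at this
  linarith

theorem exists_fiberMap_localMin_globalMax (hK₁ : 0 < K₁) (hK₂ : 0 < K₂) (hr : 0 < r)
    (hr2 : r < 2) (hp : 2 < p) {s₀ : ℝ} (hs₀ : 0 < s₀) (hpos : 0 < fiberMap A K₁ K₂ r p s₀) :
    ∃ x y, IsNegPosNeg (fiberSlope A K₁ K₂ r p) x y ∧ IsLocalMin (fiberMap A K₁ K₂ r p) x ∧
      fiberMap A K₁ K₂ r p x < 0 ∧ (∀ s, 0 < s → fiberMap A K₁ K₂ r p s ≤ fiberMap A K₁ K₂ r p y) ∧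
      0 < fiberMap A K₁ K₂ r p y := by
  set F := fiberMap A K₁ K₂ r p
  have hp0 : 0 < p := by linarith
  obtain ⟨x, y, h⟩ := exists_isNegPosNeg_fiberSlope hK₁ hK₂ hr2 hp
    (fiberSlope_peak_pos hK₁ hK₂ hr hr2 hp hs₀.le hpos)
  have hanti_left : StrictAntiOn F (Icc 0 x) := strictAntiOn_fiberMap hr hp0 (convex_Icc 0 x)
    (by rw [interior_Icc]; exact fun s hs => ⟨hs.1, h.neg_left s hs⟩)
  have hmono_mid : StrictMonoOn F (Icc x y) := strictMonoOn_fiberMap hr hp0 (convex_Icc x y)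
    (by rw [interior_Icc]; exact fun s hs => ⟨h.pos.trans hs.1, h.pos_mid s hs⟩)
  have hanti_right : StrictAntiOn F (Ici y) := strictAntiOn_fiberMap hr hp0 (convex_Ici y)
    (by rw [interior_Ici]; exact fun s hs => ⟨(h.pos.trans h.lt).trans hs, h.neg_right s hs⟩)
  have hF0 : F 0 = 0 := fiberMap_zero hr.ne' hp0.ne'
  have hnonpos : ∀ s ∈ Icc 0 x, F s ≤ 0 :=
    fun s hs => hF0 ▸ hanti_left.antitoneOn ⟨le_rfl, h.pos.le⟩ hs hs.1
  have hmax : ∀ s ∈ Ici x, F s ≤ F y := isMaxOn_iff.1 <|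
    isMaxOn_Ici_of_mono_anti hmono_mid.monotoneOn hanti_right.antitoneOn
  have hFy : 0 < F y := by
    have hxs₀ : x ≤ s₀ := by
      by_contra! hs₀x
      linarith [hnonpos s₀ ⟨hs₀.le, hs₀x.le⟩]
    exact hpos.trans_le (hmax s₀ hxs₀)
  refine ⟨x, y, h, ?_, hF0 ▸ hanti_left ⟨le_rfl, h.pos.le⟩ ⟨h.pos.le, le_rfl⟩ h.pos,
    fun s hs => ?_, hFy⟩
  · exact isLocalMin_of_anti_mono h.pos h.lt (hanti_left.antitoneOn.mono Ioc_subset_Icc_self)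
      (hmono_mid.monotoneOn.mono Ico_subset_Icc_self)
  · rcases le_total s x with hsx | hxs
    · exact (hnonpos s ⟨hs.le, hsx⟩).trans hFy.le
    · exact hmax s hxs

end Fiber

theorem mul_gamma_lt_two {N q : ℝ} (hN : 0 < N) (hq : 0 < q) (hq2 : q < 2 + 4 / N) :
    q * (N * (q - 2) / (2 * q)) < 2 := by
  have : (q - 2) * N < 4 := by rw [← lt_div_iff₀ hN]; linarith
  rw [mul_div_assoc', mul_comm q, mul_div_mul_right _ _ hq.ne']
  linarith

theorem two_lt_two_mul_div_sub_two {N : ℝ} (hN : 2 < N) : 2 < 2 * N / (N - 2) := by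
  rw [lt_div_iff₀ (by linarith)]
  linarith

theorem stmt_3_general (N : ℕ) (hN : 3 ≤ N) (A B C q : ℝ)
    (hB : 0 < B) (hC : 0 < C)
    (hq1 : 2 < q) (hq2 : q < 2 + 4 / N)
    (ψ dψ : ℝ → ℝ)
    (hψ : ∀ s : ℝ, 0 < s →
      ψ s = s ^ (2 : ℝ) / 2 * A - B / q * s ^ (q * (N * (q - 2) / (2 * q)))
              - s ^ (2 * N / ((N : ℝ) - 2)) / (2 * N / ((N : ℝ) - 2)) * C)
    (hdψ : ∀ s : ℝ, 0 < s →
      dψ s = s * A - B * (N * (q - 2) / (2 * q)) * s ^ (q * (N * (q - 2) / (2 * q)) - 1)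
              - C * s ^ (2 * N / ((N : ℝ) - 2) - 1))
    (s₀ : ℝ) (hs₀ : 0 < s₀) (hpos : 0 < ψ s₀) :
    ∃ sm sp : ℝ, 0 < sm ∧ sm < sp ∧
      (∀ s : ℝ, 0 < s → (dψ s = 0 ↔ s = sm ∨ s = sp)) ∧
      IsLocalMin ψ sm ∧ ψ sm < 0 ∧
      (∀ s : ℝ, 0 < s → ψ s ≤ ψ sp) ∧ 0 < ψ sp ∧
      (∀ s : ℝ, sp < s → dψ s < 0) := by
  have hN' : (3 : ℝ) ≤ N := by exact_mod_cast hN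
  set γ := N * (q - 2) / (2 * q)
  set p := 2 * N / ((N : ℝ) - 2)
  have hγ : 0 < γ := div_pos (mul_pos (by linarith) (by linarith)) (by linarith)
  have hF : ∀ s, 0 < s → ψ s = fiberMap A (B * γ) C (q * γ) p s := fun s hs => by
    rw [hψ s hs, fiberMap, mul_div_mul_right B q hγ.ne']
    ring
  have hdF : ∀ s, 0 < s → dψ s = s * fiberSlope A (B * γ) C (q * γ) p s := fun s hs => by
    rw [hdψ s hs, mul_fiberSlope hs]
  obtain ⟨sm, sp, h, hmin, hsm, hmax, hsp⟩ := exists_fiberMap_localMin_globalMax (mul_pos hB hγ)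
    hC (mul_pos (by linarith) hγ) (mul_gamma_lt_two (by linarith) (by linarith) hq2)
    (two_lt_two_mul_div_sub_two (by linarith)) hs₀ (hF s₀ hs₀ ▸ hpos)
  have hsp₀ : 0 < sp := h.pos.trans h.lt
  refine ⟨sm, sp, h.pos, h.lt, fun s hs => ?_, ?_, hF sm h.pos ▸ hsm, fun s hs => ?_,
    hF sp hsp₀ ▸ hsp, fun s hs => ?_⟩
  · rw [hdF s hs, mul_eq_zero, or_iff_right hs.ne', h.eq_zero_iff hs]
  · refine hmin.congr ?_
    filter_upwards [Ioi_mem_nhds h.pos] with s hs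
    exact (hF s hs).symm
  · rw [hF s hs, hF sp hsp₀]
    exact hmax s hs
  · rw [hdF s (hsp₀.trans hs)]
    exact mul_neg_of_pos_of_neg (hsp₀.trans hs) (h.neg_right s hs)

/-- Fiber map dichotomy: if `ψ(s₀) > 0` for some `s₀ > 0`, then `ψ'` has exactly two zeros
`0 < s⁻ < s⁺`, `s⁻` is a local minimum point of `ψ` with `ψ(s⁻) < 0`, `s⁺` is a global
maximum point of `ψ` on `(0, ∞)` with `ψ(s⁺) > 0`, and `ψ'(s) < 0` for all `s > s⁺`. -/
theorem stmt_3 (N : ℕ) (hN : 3 ≤ N) (A B C q : ℝ)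
    (hA : 0 < A) (hB : 0 < B) (hC : 0 < C)
    (hq1 : 2 < q) (hq2 : q < 2 + 4 / N)
    (ψ dψ : ℝ → ℝ)
    (hψ : ∀ s : ℝ, 0 < s →
      ψ s = s ^ (2 : ℝ) / 2 * A - B / q * s ^ (q * (N * (q - 2) / (2 * q)))
              - s ^ (2 * N / ((N : ℝ) - 2)) / (2 * N / ((N : ℝ) - 2)) * C)
    (hdψ : ∀ s : ℝ, 0 < s →
      dψ s = s * A - B * (N * (q - 2) / (2 * q)) * s ^ (q * (N * (q - 2) / (2 * q)) - 1)
              - C * s ^ (2 * N / ((N : ℝ) - 2) - 1))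
    (s₀ : ℝ) (hs₀ : 0 < s₀) (hpos : 0 < ψ s₀) :
    ∃ sm sp : ℝ, 0 < sm ∧ sm < sp ∧
      (∀ s : ℝ, 0 < s → (dψ s = 0 ↔ s = sm ∨ s = sp)) ∧
      IsLocalMin ψ sm ∧ ψ sm < 0 ∧
      (∀ s : ℝ, 0 < s → ψ s ≤ ψ sp) ∧ 0 < ψ sp ∧
      (∀ s : ℝ, sp < s → dψ s < 0) :=
  stmt_3_general N hN A B C q hB hC hq1 hq2 ψ dψ hψ hdψ s₀ hs₀ hpos
end

section
/- Let N ≥ 3, 2 < q < 2 + 4/N, γ_q = N(q-2)/(2q), 2* = 2N/(N-2). If qγ_q > 1, then the function ψ''(s) = A - Bγ_q(qγ_q - 1)s^{qγ_q - 2} - C(2* - 1)s^{2* - 2} (with A, B, C > 0) has at most two zeros on (0,∞). -/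
/-!
For `s > 0`, `ψ'' s = 0` says `β s^a + γ s^b = A` with `a = qγ_q - 2`, `b = 2* - 2 ≠ 0`,
`β = Bγ_q(qγ_q - 1) ≥ 0` and `γ = C(2* - 1) > 0`. In the variable `t = log s` the left-hand side
is `β e^{at} + γ e^{bt}`, which is strictly convex, and a strictly convex function takes each
value at most twice.
-/

open Real Set

lemma convexOn_const_mul_exp_mul {c : ℝ} (hc : 0 ≤ c) (a : ℝ) :
    ConvexOn ℝ univ fun t => c * exp (a * t) := by
  simpa using (convexOn_exp.comp_linearMap (LinearMap.mul ℝ ℝ a)).smul hc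

lemma strictConvexOn_const_mul_exp_mul {c b : ℝ} (hc : 0 < c) (hb : b ≠ 0) :
    StrictConvexOn ℝ univ fun t => c * exp (b * t) := by
  refine ⟨convex_univ, fun x _ y _ hxy μ ν hμ hν hμν => ?_⟩
  have hexp := strictConvexOn_exp.2 (mem_univ (b * x)) (mem_univ (b * y))
    (by simpa [hb] using hxy) hμ hν hμν
  simp only [smul_eq_mul] at hexp ⊢
  calc c * exp (b * (μ * x + ν * y)) = c * exp (μ * (b * x) + ν * (b * y)) := by ring_nf
    _ < c * (μ * exp (b * x) + ν * exp (b * y)) := by gcongr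
    _ = μ * (c * exp (b * x)) + ν * (c * exp (b * y)) := by ring

lemma StrictConvexOn.lt_max_of_lt_of_lt {s : Set ℝ} {f : ℝ → ℝ} (hf : StrictConvexOn ℝ s f)
    {x y z : ℝ} (hx : x ∈ s) (hz : z ∈ s) (hxy : x < y) (hyz : y < z) :
    f y < max (f x) (f z) :=
  hf.lt_on_openSegment hx hz (hxy.trans hyz).ne <| by
    rw [openSegment_eq_Ioo (hxy.trans hyz)]
    exact ⟨hxy, hyz⟩

lemma StrictConvexOn.eq_or_eq_or_eq_of_map_eq {s : Set ℝ} {f : ℝ → ℝ}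
    (hf : StrictConvexOn ℝ s f) {c x y z : ℝ} (hx : x ∈ s) (hy : y ∈ s) (hz : z ∈ s)
    (hfx : f x = c) (hfy : f y = c) (hfz : f z = c) : x = y ∨ x = z ∨ y = z := by
  wlog hxy : x < y generalizing x y
  · rcases (not_lt.1 hxy).eq_or_lt with h | h
    · exact Or.inl h.symm
    · have := this hy hx hfy hfx h
      tauto
  have middle {u v w : ℝ} (hu : u ∈ s) (hw : w ∈ s) (huv : u < v) (hvw : v < w)
      (hfu : f u = c) (hfv : f v = c) (hfw : f w = c) : False := by
    simpa [hfu, hfv, hfw] using hf.lt_max_of_lt_of_lt hu hw huv hvw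
  rcases lt_trichotomy z x with hzx | rfl | hxz
  · exact (middle hz hy hzx hxy hfz hfx hfy).elim
  · exact Or.inr (Or.inl rfl)
  rcases lt_trichotomy z y with hzy | rfl | hyz
  · exact (middle hx hy hxz hzy hfx hfz hfy).elim
  · exact Or.inr (Or.inr rfl)
  · exact (middle hx hz hxy hyz hfx hfy hfz).elim

lemma eq_or_eq_or_eq_of_mul_rpow_add_mul_rpow_eq {β γ a b c x y z : ℝ} (hβ : 0 ≤ β)
    (hγ : 0 < γ) (hb : b ≠ 0) (hx : 0 < x) (hy : 0 < y) (hz : 0 < z)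
    (hfx : β * x ^ a + γ * x ^ b = c) (hfy : β * y ^ a + γ * y ^ b = c)
    (hfz : β * z ^ a + γ * z ^ b = c) : x = y ∨ x = z ∨ y = z := by
  have hconv : StrictConvexOn ℝ univ fun t => β * exp (a * t) + γ * exp (b * t) :=
    (convexOn_const_mul_exp_mul hβ a).add_strictConvexOn (strictConvexOn_const_mul_exp_mul hγ hb)
  have hlog {u : ℝ} (hu : 0 < u) :
      β * exp (a * log u) + γ * exp (b * log u) = β * u ^ a + γ * u ^ b := by
    rw [rpow_def_of_pos hu, rpow_def_of_pos hu, mul_comm a, mul_comm b]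
  have := hconv.eq_or_eq_or_eq_of_map_eq (mem_univ _) (mem_univ _) (mem_univ _)
    ((hlog hx).trans hfx) ((hlog hy).trans hfy) ((hlog hz).trans hfz)
  simpa only [log_injOn_pos.eq_iff hx hy, log_injOn_pos.eq_iff hx hz,
    log_injOn_pos.eq_iff hy hz] using this

theorem stmt_4_general (N : ℕ) (hN : 3 ≤ N) (A B C q : ℝ)
    (hB : 0 < B) (hC : 0 < C)
    (hq1 : 2 < q)
    (hqγ : 1 < q * (N * (q - 2) / (2 * q)))
    (ψ'' : ℝ → ℝ)
    (hψ'' : ∀ s : ℝ, 0 < s →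
      ψ'' s = A
        - B * (N * (q - 2) / (2 * q)) * (q * (N * (q - 2) / (2 * q)) - 1)
            * s ^ (q * (N * (q - 2) / (2 * q)) - 2)
        - C * (2 * N / ((N : ℝ) - 2) - 1) * s ^ (2 * N / ((N : ℝ) - 2) - 2)) :
    ∀ s₁ s₂ s₃ : ℝ, 0 < s₁ → 0 < s₂ → 0 < s₃ →
      ψ'' s₁ = 0 → ψ'' s₂ = 0 → ψ'' s₃ = 0 →
      s₁ = s₂ ∨ s₁ = s₃ ∨ s₂ = s₃ := by
  intro s₁ s₂ s₃ h₁ h₂ h₃ z₁ z₂ z₃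
  have hN2 : (0 : ℝ) < N - 2 := by
    have : (3 : ℝ) ≤ N := by exact_mod_cast hN
    linarith
  have hγq : 0 < N * (q - 2) / (2 * q) := by
    have : (0 : ℝ) < q - 2 := by linarith
    positivity
  have h2star : 2 < 2 * N / ((N : ℝ) - 2) := by
    rw [lt_div_iff₀ hN2]
    linarith
  have hzero {s : ℝ} (hs : 0 < s) (hψs : ψ'' s = 0) :
      B * (N * (q - 2) / (2 * q)) * (q * (N * (q - 2) / (2 * q)) - 1)
          * s ^ (q * (N * (q - 2) / (2 * q)) - 2)
        + C * (2 * N / ((N : ℝ) - 2) - 1) * s ^ (2 * N / ((N : ℝ) - 2) - 2) = A := by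
    linarith [hψ'' s hs]
  exact eq_or_eq_or_eq_of_mul_rpow_add_mul_rpow_eq
    (mul_pos (mul_pos hB hγq) (by linarith)).le (mul_pos hC (by linarith)) (by linarith)
    h₁ h₂ h₃ (hzero h₁ z₁) (hzero h₂ z₂) (hzero h₃ z₃)

/-- If `qγ_q > 1`, the function
`ψ''(s) = A - Bγ_q(qγ_q - 1)s^(qγ_q - 2) - C(2* - 1)s^(2* - 2)` has at most two zeros
on `(0, ∞)`. -/
theorem stmt_4 (N : ℕ) (hN : 3 ≤ N) (A B C q : ℝ)
    (hA : 0 < A) (hB : 0 < B) (hC : 0 < C)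
    (hq1 : 2 < q) (hq2 : q < 2 + 4 / N)
    (hqγ : 1 < q * (N * (q - 2) / (2 * q)))
    (ψ'' : ℝ → ℝ)
    (hψ'' : ∀ s : ℝ, 0 < s →
      ψ'' s = A
        - B * (N * (q - 2) / (2 * q)) * (q * (N * (q - 2) / (2 * q)) - 1)
            * s ^ (q * (N * (q - 2) / (2 * q)) - 2)
        - C * (2 * N / ((N : ℝ) - 2) - 1) * s ^ (2 * N / ((N : ℝ) - 2) - 2)) :
    ∀ s₁ s₂ s₃ : ℝ, 0 < s₁ → 0 < s₂ → 0 < s₃ →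
      ψ'' s₁ = 0 → ψ'' s₂ = 0 → ψ'' s₃ = 0 →
      s₁ = s₂ ∨ s₁ = s₃ ∨ s₂ = s₃ :=
  stmt_4_general N hN A B C q hB hC hq1 hqγ ψ'' hψ''
end
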